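/- Let t be a real number with t < 0, and put z := 1/(1−t), so 0 < z < 1. Then ∫_{1/t}^{0} dx / √( x(x−1)(1−tx) ) = π · √z · ₂F₁(1/2, 1/2; 1; z). (This is the period of the holomorphic differential dx/y on the Legendre elliptic curve y² = x(1−x)(1−tx) over the cycle around the interval from x = 1/t to x = 0.) -/

import Mathlib

set_option autoImplicit false

open scoped Real

/-- Pochhammer symbol `(a)_n = a(a+1)⋯(a+n−1)` for a real number. -/
noncomputable def pochR (a : ℝ) (n : ℕ) : ℝ := ∏ k ∈ Finset.range n, (a + k)

/-- Gauss hypergeometric series `₂F₁(a,b;c;x)` (real). -/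
noncomputable def hyp2F1 (a b c x : ℝ) : ℝ :=
  ∑' n : ℕ, (pochR a n * pochR b n) / (pochR c n * (n.factorial : ℝ)) * x ^ n

/-!
The substitution `x = (1 - u) / t` turns the period into `√z` times Euler's integral
`∫₀¹ du / √(u (1 - u) (1 - z u))`, and `u = sin² θ` turns that into the complete elliptic
integral `2 ∫₀^{π/2} dθ / √(1 - z sin² θ)`. Expanding `(1 - z sin² θ)^{-1/2}` by the binomial
series and integrating term by term with Wallis' formula
`∫₀^{π/2} sin^{2n} θ dθ = (π/2) (1/2)_n / n!` produces `(π/2) ₂F₁(1/2, 1/2; 1; z)`.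
-/

open Real Set MeasureTheory intervalIntegral

lemma ascPochhammer_eval_eq_pochR (a : ℝ) (n : ℕ) :
    (ascPochhammer ℝ n).eval a = pochR a n := by
  induction n with
  | zero => simp [pochR]
  | succ n ih => rw [ascPochhammer_succ_eval, ih]; exact (Finset.prod_range_succ _ _).symm

lemma pochR_one (n : ℕ) : pochR 1 n = n.factorial := by
  rw [← ascPochhammer_eval_eq_pochR, ascPochhammer_eval_one]

lemma pochR_nonneg {a : ℝ} (ha : 0 ≤ a) (n : ℕ) : 0 ≤ pochR a n :=
  Finset.prod_nonneg fun _ _ => by positivity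

lemma choose_add_sub_one_eq_pochR_div_factorial (a : ℝ) (n : ℕ) :
    Ring.choose (a + n - 1) n = pochR a n / n.factorial := by
  rw [← Ring.multichoose_eq, eq_div_iff (by positivity), mul_comm, ← nsmul_eq_mul,
    Ring.factorial_nsmul_multichoose_eq_ascPochhammer, Polynomial.ascPochhammer_smeval_eq_eval,
    ascPochhammer_eval_eq_pochR]

lemma hasSum_pochR_div_factorial_mul_pow (a : ℝ) {w : ℝ} (hw : |w| < 1) :
    HasSum (fun n => pochR a n / n.factorial * w ^ n) (1 / (1 - w) ^ a) := by
  have h := (one_div_one_sub_rpow_hasFPowerSeriesOnBall_zero a).hasSum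
    (y := w) (by simpa [enorm_eq_nnnorm, ← NNReal.coe_lt_coe] using hw)
  simpa [FormalMultilinearSeries.ofScalars_apply_eq, choose_add_sub_one_eq_pochR_div_factorial,
    mul_comm] using h

lemma integral_sin_pow_even_zero_pi_div_two (n : ℕ) :
    ∫ x in (0:ℝ)..π / 2, sin x ^ (2 * n) = π / 2 * (pochR (1 / 2) n / n.factorial) := by
  have hreflect : ∫ x in π / 2..π, sin x ^ (2 * n) = ∫ x in (0:ℝ)..π / 2, sin x ^ (2 * n) := by
    simpa [sin_pi_sub, show π - π / 2 = π / 2 by ring] using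
      (integral_comp_sub_left (fun x => sin x ^ (2 * n)) π (a := 0) (b := π / 2)).symm
  have hfull := integral_add_adjacent_intervals (μ := volume)
    (f := fun x => sin x ^ (2 * n)) (a := 0) (b := π / 2) (c := π)
    (by apply Continuous.intervalIntegrable; fun_prop)
    (by apply Continuous.intervalIntegrable; fun_prop)
  have hprod : ∏ i ∈ Finset.range n, (2 * (i : ℝ) + 1) / (2 * i + 2)
      = pochR (1 / 2) n / pochR 1 n := by
    rw [pochR, pochR, ← Finset.prod_div_distrib]
    refine Finset.prod_congr rfl fun i _ => ?_
    field_simp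
    ring
  rw [hreflect, integral_sin_pow_even, hprod, pochR_one] at hfull
  linarith

lemma image_sin_sq_Ioo : (fun x => sin x ^ 2) '' Ioo 0 (π / 2) = Ioo 0 1 := by
  ext u
  constructor
  · rintro ⟨x, ⟨hx0, hx1⟩, rfl⟩
    have hsin : 0 < sin x := sin_pos_of_pos_of_lt_pi hx0 (by linarith [pi_pos])
    have hcos : 0 < cos x := cos_pos_of_mem_Ioo ⟨by linarith, hx1⟩
    exact ⟨by positivity, by nlinarith [sin_sq_add_cos_sq x]⟩
  · rintro ⟨hu0, hu1⟩
    have hs0 : 0 < √u := sqrt_pos.2 hu0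
    have hs1 : √u < 1 := (sqrt_lt' one_pos).2 (by simpa using hu1)
    refine ⟨arcsin √u, ⟨arcsin_pos.2 hs0, arcsin_lt_pi_div_two.2 hs1⟩, ?_⟩
    simp only
    rw [sin_arcsin (by linarith) hs1.le, sq_sqrt hu0.le]

lemma strictMonoOn_sin_sq : StrictMonoOn (fun x => sin x ^ 2) (Ioo 0 (π / 2)) := by
  intro x hx y hy hxy
  have hsin : 0 ≤ sin x := sin_nonneg_of_nonneg_of_le_pi hx.1.le (by linarith [hx.2, pi_pos])
  exact pow_lt_pow_left₀
    (sin_lt_sin_of_lt_of_le_pi_div_two (by linarith [hx.1, pi_pos]) hy.2.le hxy) hsin two_ne_zero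

lemma integral_div_sqrt_mul_one_sub_eq_integral_sin_sq (f : ℝ → ℝ) :
    ∫ u in (0:ℝ)..1, f u / √(u * (1 - u)) = 2 * ∫ x in (0:ℝ)..π / 2, f (sin x ^ 2) := by
  have hderiv : ∀ x ∈ Ioo 0 (π / 2),
      HasDerivWithinAt (fun x => sin x ^ 2) (2 * sin x * cos x) (Ioo 0 (π / 2)) x := by
    intro x _
    simpa using ((hasDerivAt_sin x).fun_pow 2).hasDerivWithinAt
  have hcov := integral_image_eq_integral_abs_deriv_smul measurableSet_Ioo hderiv
    strictMonoOn_sin_sq.injOn (fun u => f u / √(u * (1 - u)))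
  rw [image_sin_sq_Ioo] at hcov
  rw [integral_of_le zero_le_one, integral_of_le (by positivity), integral_Ioc_eq_integral_Ioo,
    integral_Ioc_eq_integral_Ioo, hcov, ← MeasureTheory.integral_const_mul]
  refine setIntegral_congr_fun measurableSet_Ioo fun x ⟨hx0, hx1⟩ => ?_
  have hsin : 0 < sin x := sin_pos_of_pos_of_lt_pi hx0 (by linarith [pi_pos])
  have hcos : 0 < cos x := cos_pos_of_mem_Ioo ⟨by linarith, hx1⟩
  have hsqrt : √(sin x ^ 2 * (1 - sin x ^ 2)) = sin x * cos x := by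
    rw [← cos_sq', ← mul_pow, sqrt_sq (by positivity)]
  simp only [smul_eq_mul]
  rw [hsqrt, abs_of_pos (by positivity)]
  field_simp

lemma integral_one_div_one_sub_mul_sin_sq_rpow {a z : ℝ} (ha : 0 ≤ a) (hz : |z| < 1) :
    ∫ x in (0:ℝ)..π / 2, 1 / (1 - z * sin x ^ 2) ^ a = π / 2 * hyp2F1 a (1 / 2) 1 z := by
  have hcoef : ∀ n, 0 ≤ pochR a n / n.factorial := fun n => by
    have := pochR_nonneg ha n; positivity
  have hterm : ∀ n, ∫ x in (0:ℝ)..π / 2, pochR a n / n.factorial * (z * sin x ^ 2) ^ n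
      = π / 2 * ((pochR a n * pochR (1 / 2) n) / (pochR 1 n * n.factorial) * z ^ n) := by
    intro n
    simp_rw [show ∀ x, pochR a n / n.factorial * (z * sin x ^ 2) ^ n
        = pochR a n / n.factorial * z ^ n * sin x ^ (2 * n) from fun x => by ring]
    rw [intervalIntegral.integral_const_mul, integral_sin_pow_even_zero_pi_div_two, pochR_one]
    field_simp
  have hzsin : ∀ x, |z * sin x ^ 2| ≤ |z| := fun x => by
    rw [abs_mul, abs_of_nonneg (sq_nonneg (sin x))]
    exact mul_le_of_le_one_right (abs_nonneg z) (sin_sq_le_one x)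
  -- dominated by the binomial series at `|z|`, whose coefficients are nonnegative
  have hsum := intervalIntegral.hasSum_integral_of_dominated_convergence
    (F := fun n x => pochR a n / n.factorial * (z * sin x ^ 2) ^ n)
    (f := fun x => 1 / (1 - z * sin x ^ 2) ^ a) (μ := volume) (a := 0) (b := π / 2)
    (fun n _ => pochR a n / n.factorial * |z| ^ n)
    (fun n => (by fun_prop : Continuous _).aestronglyMeasurable)
    (fun n => .of_forall fun x _ => by
      rw [norm_mul, norm_pow, Real.norm_of_nonneg (hcoef n), Real.norm_eq_abs]
      exact mul_le_mul_of_nonneg_left (pow_le_pow_left₀ (abs_nonneg _) (hzsin x) n) (hcoef n))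
    (.of_forall fun _ _ => (hasSum_pochR_div_factorial_mul_pow a (by rwa [abs_abs])).summable)
    intervalIntegrable_const
    (.of_forall fun x _ => hasSum_pochR_div_factorial_mul_pow a ((hzsin x).trans_lt hz))
  simp_rw [hterm] at hsum
  rw [← hsum.tsum_eq, tsum_mul_left, hyp2F1]

lemma integral_one_div_sqrt_mul_one_sub_mul_one_sub_mul {z : ℝ} (hz : |z| < 1) :
    ∫ u in (0:ℝ)..1, 1 / √(u * (1 - u) * (1 - z * u)) = π * hyp2F1 (1 / 2) (1 / 2) 1 z := by
  have hsplit : ∀ u ∈ uIcc (0:ℝ) 1,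
      1 / √(u * (1 - u) * (1 - z * u)) = 1 / (1 - z * u) ^ (1 / 2 : ℝ) / √(u * (1 - u)) := by
    intro u hu
    rw [uIcc_of_le zero_le_one] at hu
    rw [sqrt_mul (mul_nonneg hu.1 (by linarith [hu.2])), ← sqrt_eq_rpow]
    ring
  rw [integral_congr hsplit, integral_div_sqrt_mul_one_sub_eq_integral_sin_sq,
    integral_one_div_one_sub_mul_sin_sq_rpow (by norm_num) hz]
  ring

lemma integral_legendre_period_eq_sqrt_mul_integral {t z : ℝ} (ht : t < 0)
    (hz : z = 1 / (1 - t)) :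
    ∫ x in (1/t)..(0:ℝ), 1 / √(x * (x - 1) * (1 - t * x))
      = √z * ∫ u in (0:ℝ)..1, 1 / √(u * (1 - u) * (1 - z * u)) := by
  have hz0 : 0 < z := by rw [hz]; exact one_div_pos.2 (by linarith)
  -- `x = (1 - u) / t` gives `x (x - 1) (1 - t x) = u (1 - u) (1 - z u) / (z t²)`
  have hsubst : ∀ u, 1 / √((1 / t - u / t) * (1 / t - u / t - 1) * (1 - t * (1 / t - u / t)))
      = -t * √z * (1 / √(u * (1 - u) * (1 - z * u))) := by
    intro u
    have harg : (1 / t - u / t) * (1 / t - u / t - 1) * (1 - t * (1 / t - u / t))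
        = u * (1 - u) * (1 - z * u) / (√z * -t) ^ 2 := by
      have ht0 : t ≠ 0 := ht.ne
      have h1t : 1 - t ≠ 0 := by linarith
      rw [mul_pow, sq_sqrt hz0.le, hz]
      field_simp
      ring
    rw [harg, sqrt_div' _ (sq_nonneg _), sqrt_sq (by nlinarith [sqrt_pos.2 hz0]), one_div_div]
    ring
  calc ∫ x in (1/t)..(0:ℝ), 1 / √(x * (x - 1) * (1 - t * x))
      = (-t)⁻¹ * ∫ u in (0:ℝ)..1, 1 / √((1 / t - u / t) * (1 / t - u / t - 1)
          * (1 - t * (1 / t - u / t))) := by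
        rw [integral_comp_sub_div (fun x => 1 / √(x * (x - 1) * (1 - t * x))) ht.ne,
          sub_self, zero_div, sub_zero, integral_symm, smul_eq_mul, inv_neg, neg_mul,
          inv_mul_cancel_left₀ ht.ne]
    _ = √z * ∫ u in (0:ℝ)..1, 1 / √(u * (1 - u) * (1 - z * u)) := by
        simp_rw [hsubst, intervalIntegral.integral_const_mul]
        rw [← mul_assoc, ← mul_assoc, inv_mul_cancel₀ (neg_ne_zero.2 ht.ne), one_mul]

theorem stmt11 (t : ℝ) (ht : t < 0) (z : ℝ) (hz : z = 1 / (1 - t)) :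
    ∫ x in (1/t)..(0:ℝ), 1 / Real.sqrt (x * (x - 1) * (1 - t * x))
      = π * Real.sqrt z * hyp2F1 (1/2) (1/2) 1 z := by
  have hz0 : 0 < z := by rw [hz]; exact one_div_pos.2 (by linarith)
  have hz1 : z < 1 := by rw [hz, div_lt_one (by linarith)]; linarith
  rw [integral_legendre_period_eq_sqrt_mul_integral ht hz,
    integral_one_div_sqrt_mul_one_sub_mul_one_sub_mul (by rwa [abs_of_pos hz0])]
  ring
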